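/- (Sub-Gaussian inaccuracy bound, Eq. (4) of the paper, with explicit constant.) Let (X_i)_{i≥1} be i.i.d. integrable real random variables with mean m = E[X₁] > 0, and suppose X₁ − m is sub-Gaussian with variance proxy c > 0, i.e. E[exp(λ(X₁ − m))] ≤ exp(c·λ²/2) for all λ ∈ ℝ. Then for every integer j ≥ 1 and every ε ∈ (0,1), the ε-inaccuracy of the j-th tick time T_j = X₁ + ⋯ + X_j satisfies Σ_j(ε) ≤ (2·√(2c)/m)·√( j·ln(2/ε) ). -/

import Mathlib

open MeasureTheory ProbabilityTheory

/-- The `ε`-inaccuracy `Σ_j(ε)` of a random variable `S` interpreted as the time of the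
`j`-th tick of a clock: the infimum of `j·σ/μ` over all `μ > 0` and `σ ≥ 0` such that
`S` lies in `[μ − σ/2, μ + σ/2]` with probability at least `1 − ε`; it is `+∞` if no
such pair exists. -/
noncomputable def inaccuracy {Ω : Type*} [MeasurableSpace Ω] (P : Measure Ω)
    (S : Ω → ℝ) (j : ℕ) (ε : ℝ) : ENNReal :=
  ⨅ (μ : ℝ) (σ : ℝ) (_ : 0 < μ) (_ : 0 ≤ σ)
    (_ : ENNReal.ofReal (1 - ε) ≤ P {ω | S ω ∈ Set.Icc (μ - σ / 2) (μ + σ / 2)}),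
    ENNReal.ofReal (j * σ / μ)

/-!
Centring the ticks at `m`, the sum `T_j − j·m` is sub-Gaussian with variance proxy `j·c`, so
both of its tails beyond `t = √(2jc·ln(2/ε))` have probability at most `ε/2`. Hence `T_j` lies
in the window of centre `μ = j·m` and width `σ = 2t` with probability at least `1 − ε`, and
`j·σ/μ = 2t/m` is the claimed bound.
-/

lemma inaccuracy_le_of_measure_Icc {Ω : Type*} [MeasurableSpace Ω] {P : Measure Ω}
    {S : Ω → ℝ} (j : ℕ) {ε μ σ : ℝ} (hμ : 0 < μ) (hσ : 0 ≤ σ)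
    (h : ENNReal.ofReal (1 - ε) ≤ P {ω | S ω ∈ Set.Icc (μ - σ / 2) (μ + σ / 2)}) :
    inaccuracy P S j ε ≤ ENNReal.ofReal (j * σ / μ) :=
  iInf_le_of_le μ <| iInf_le_of_le σ <| iInf_le_of_le hμ <| iInf_le_of_le hσ <| iInf_le _ h

lemma inaccuracy_le_of_measureReal_abs_sub_ge_le {Ω : Type*} [MeasurableSpace Ω]
    {P : Measure Ω} [IsProbabilityMeasure P] {S : Ω → ℝ} (j : ℕ) {ε a t : ℝ}
    (ha : 0 < a) (ht : 0 ≤ t) (h : P.real {ω | t ≤ |S ω - a|} ≤ ε) :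
    inaccuracy P S j ε ≤ ENNReal.ofReal (j * (2 * t) / a) := by
  set A := {ω | S ω ∈ Set.Icc (a - 2 * t / 2) (a + 2 * t / 2)}
  have hcompl : Aᶜ ⊆ {ω | t ≤ |S ω - a|} := by
    intro ω hω
    simp only [A, Set.mem_compl_iff, Set.mem_ofPred_eq, Set.mem_Icc, not_and_or, not_le] at hω
    rw [Set.mem_ofPred_eq, le_abs]
    rcases hω with hlow | hhigh
    · right; linarith
    · left; linarith
  have hcover : 1 ≤ P.real A + P.real Aᶜ := by
    simpa [Set.union_compl_self] using measureReal_union_le (μ := P) A Aᶜ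
  refine inaccuracy_le_of_measure_Icc j ha (by positivity) ?_
  refine ENNReal.ofReal_le_of_le_toReal (show 1 - ε ≤ P.real A from ?_)
  linarith [measureReal_mono (μ := P) hcompl]

namespace ProbabilityTheory.HasSubgaussianMGF

variable {Ω : Type*} [MeasurableSpace Ω] {μ : Measure Ω} {X : Ω → ℝ} {c : NNReal}

lemma measureReal_abs_ge_le (h : HasSubgaussianMGF X c μ) {ε : ℝ}
    (hε : 0 ≤ ε) : μ.real {ω | ε ≤ |X ω|} ≤ 2 * Real.exp (-ε ^ 2 / (2 * c)) := by
  have hsplit : {ω | ε ≤ |X ω|} = {ω | ε ≤ X ω} ∪ {ω | ε ≤ (-X) ω} := by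
    ext ω
    simp [le_abs]
  calc μ.real {ω | ε ≤ |X ω|}
      ≤ μ.real {ω | ε ≤ X ω} + μ.real {ω | ε ≤ (-X) ω} := hsplit ▸ measureReal_union_le _ _
    _ ≤ Real.exp (-ε ^ 2 / (2 * c)) + Real.exp (-ε ^ 2 / (2 * c)) :=
        add_le_add (h.measure_ge_le hε) (h.neg.measure_ge_le hε)
    _ = 2 * Real.exp (-ε ^ 2 / (2 * c)) := by ring

end ProbabilityTheory.HasSubgaussianMGF

lemma hasSubgaussianMGF_sum_range_sub_of_iIndepFun {Ω : Type*} [MeasurableSpace Ω]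
    {P : Measure Ω} {X : ℕ → Ω → ℝ} (hindep : iIndepFun X P)
    (hident : ∀ k, IdentDistrib (X k) (X 0) P P) {m : ℝ} {c : NNReal}
    (hsub : HasSubgaussianMGF (fun ω => X 0 ω - m) c P) (n : ℕ) :
    HasSubgaussianMGF (fun ω => ∑ i ∈ Finset.range n, X i ω - n * m) (n * c) P := by
  have hcentred : ∀ i ∈ Finset.range n, HasSubgaussianMGF (fun ω => X i ω - m) c P :=
    fun i _ => hsub.congr_identDistrib ((hident i).symm.comp (measurable_id.sub_const m))
  have hsum := HasSubgaussianMGF.sum_of_iIndepFun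
    (hindep.comp (fun _ x => x - m) fun _ => measurable_id.sub_const m) hcentred
  simpa [Finset.sum_sub_distrib] using hsum

theorem subGaussian_inaccuracy_bound_general {Ω : Type*} [MeasurableSpace Ω]
    (P : Measure Ω) [IsProbabilityMeasure P] (X : ℕ → Ω → ℝ)
    (hindep : iIndepFun X P)
    (hident : ∀ k, IdentDistrib (X k) (X 0) P P)
    (m : ℝ) (hmpos : 0 < m)
    (c : ℝ) (hc : 0 < c)
    (hsubint : ∀ l : ℝ, Integrable (fun ω => Real.exp (l * (X 0 ω - m))) P)
    (hsub : ∀ l : ℝ, ∫ ω, Real.exp (l * (X 0 ω - m)) ∂P ≤ Real.exp (c * l ^ 2 / 2))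
    (j : ℕ) (hj : 1 ≤ j) (ε : ℝ) (hε : ε ∈ Set.Ioo (0 : ℝ) 1) :
    inaccuracy P (fun ω => ∑ i ∈ Finset.range j, X i ω) j ε ≤
      ENNReal.ofReal ((2 * Real.sqrt (2 * c) / m) * Real.sqrt (j * Real.log (2 / ε))) := by
  obtain ⟨hε0, hε1⟩ := hε
  have hjpos : (0 : ℝ) < j := by exact_mod_cast hj
  set L := Real.log (2 / ε)
  have hL : 0 < L := Real.log_pos (by rw [lt_div_iff₀ hε0]; linarith)
  set t := Real.sqrt (2 * c) * Real.sqrt (j * L)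
  have ht2 : t ^ 2 = 2 * (j * c) * L := by
    rw [mul_pow, Real.sq_sqrt (by positivity), Real.sq_sqrt (by positivity)]; ring
  have hT := hasSubgaussianMGF_sum_range_sub_of_iIndepFun hindep hident
    (c := ⟨c, hc.le⟩) ⟨hsubint, hsub⟩ j
  have htail : P.real {ω | t ≤ |∑ i ∈ Finset.range j, X i ω - j * m|} ≤ ε := by
    calc _ ≤ 2 * Real.exp (-t ^ 2 / (2 * (j * c))) := by
          exact_mod_cast hT.measureReal_abs_ge_le (by positivity)
      _ = ε := by
          rw [ht2, show -(2 * (j * c) * L) / (2 * (j * c)) = -L by field_simp,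
            Real.exp_neg, Real.exp_log (by positivity)]
          field_simp
  calc _ ≤ ENNReal.ofReal (j * (2 * t) / (j * m)) :=
        inaccuracy_le_of_measureReal_abs_sub_ge_le j (by positivity) (by positivity) htail
    _ = _ := by congr 1; simp only [t]; field_simp

/-- **Sub-Gaussian inaccuracy bound** (Eq. (4) of the paper, with explicit constant).
Let `(X_i)` be i.i.d. integrable real random variables with mean `m = E[X₁] > 0`, and
suppose `X₁ − m` is sub-Gaussian with variance proxy `c > 0`, i.e.
`E[exp(λ(X₁ − m))] ≤ exp(c·λ²/2)` for all `λ ∈ ℝ`.  Then for every integer `j ≥ 1` and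
every `ε ∈ (0,1)`, the `ε`-inaccuracy of the `j`-th tick time `T_j = X₁ + ⋯ + X_j`
satisfies `Σ_j(ε) ≤ (2·√(2c)/m)·√(j·ln(2/ε))`. -/
theorem subGaussian_inaccuracy_bound {Ω : Type*} [MeasurableSpace Ω]
    (P : Measure Ω) [IsProbabilityMeasure P] (X : ℕ → Ω → ℝ)
    (hmeas : ∀ k, Measurable (X k))
    (hindep : iIndepFun X P)
    (hident : ∀ k, IdentDistrib (X k) (X 0) P P)
    (hint : Integrable (X 0) P)
    (m : ℝ) (hm : m = ∫ ω, X 0 ω ∂P) (hmpos : 0 < m)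
    (c : ℝ) (hc : 0 < c)
    (hsubint : ∀ l : ℝ, Integrable (fun ω => Real.exp (l * (X 0 ω - m))) P)
    (hsub : ∀ l : ℝ, ∫ ω, Real.exp (l * (X 0 ω - m)) ∂P ≤ Real.exp (c * l ^ 2 / 2))
    (j : ℕ) (hj : 1 ≤ j) (ε : ℝ) (hε : ε ∈ Set.Ioo (0 : ℝ) 1) :
    inaccuracy P (fun ω => ∑ i ∈ Finset.range j, X i ω) j ε ≤
      ENNReal.ofReal ((2 * Real.sqrt (2 * c) / m) * Real.sqrt (j * Real.log (2 / ε))) :=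
  subGaussian_inaccuracy_bound_general P X hindep hident m hmpos c hc hsubint hsub j hj ε hε
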